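/- arXiv:1802.02708 — 4 statements merged into one kernel-verified Lean document; each statement's English description precedes it below -/
import Mathlib

section
/- Continuity of roots: Let f(x) = Σ_{l=0}^n a_l x^l ∈ ℂ[x] be monic of degree n with distinct roots α₁,…,α_k of multiplicities m₁,…,m_k. For any ε with 0 < ε < min_{i<j} |αᵢ − αⱼ|/2, there exists δ > 0 such that every monic polynomial g(x) = Σ_{l=0}^n b_l x^l of degree n with |b_l − a_l| < δ for all l = 0,…,n−1 has exactly m_j roots (counted with multiplicity) in the open disk D(α_j; ε) = {z ∈ ℂ : |z − α_j| < ε}, for each j = 1,…,k. -/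
/-!
Along an ultrafilter, monic polynomials `gᵢ` of degree `n` converging coefficientwise to `p`
eventually have roots that can be matched with those of `p`, multiplicities included, within any
prescribed distance. This goes by induction on `n`: the Cauchy bound keeps a choice of roots `zᵢ`
of `gᵢ` in a compact ball, so they converge to some `w`, which is a root of `p`; dividing by
`X - C zᵢ` and `X - C w` preserves coefficientwise convergence. Once the roots of `g` are matched
with those of `f` within `ε`, the `2ε`-separation of the `α j` forces the roots of `g` in the
`ε`-disk around `α j` to be exactly those matched with `α j`.
-/

open Polynomial

open Filter Topology Multiset

theorem Multiset.Rel.card_filter_eq {α β : Type*} {r : α → β → Prop} {p : α → Prop}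
    {q : β → Prop} [DecidablePred p] [DecidablePred q] {s : Multiset α} {t : Multiset β}
    (h : Rel r s t) (hpq : ∀ a ∈ s, ∀ b ∈ t, r a b → (p a ↔ q b)) :
    (s.filter p).card = (t.filter q).card := by
  have h' := h.mono hpq
  clear h hpq
  induction h' with
  | zero => rfl
  | @cons a b _ _ hab _ ih =>
    by_cases hpa : p a <;> simp [hpa, hab.mp, hab.not.mp, ih]

theorem dist_lt_iff_eq_of_separated {X : Type*} [PseudoMetricSpace X] {a b c : X} {ε : ℝ}
    (hab : dist a b < ε) (hbc : b ≠ c → ε < dist b c / 2) : dist a c < ε ↔ b = c := by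
  refine ⟨fun hac => ?_, fun hbc => hbc ▸ hab⟩
  by_contra hne
  linarith [hbc hne, dist_triangle_left b c a]

namespace Polynomial

variable {ι : Type*}

theorem roots_prod_X_sub_C_pow {R : Type*} [CommRing R] [IsDomain R] (s : Finset ι)
    (α : ι → R) (m : ι → ℕ) :
    (∏ j ∈ s, (X - C (α j)) ^ m j).roots = ∑ j ∈ s, m j • {α j} := by
  rw [roots_prod _ _ (monic_prod_of_monic _ _ fun j _ => (monic_X_sub_C (α j)).pow _).ne_zero]
  simp only [roots_pow, roots_X_sub_C]
  rfl

theorem Monic.roots_eq_cons_roots_divByMonic {R : Type*} [CommRing R] [IsDomain R] {p : R[X]}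
    (hp : p.Monic) {a : R} (ha : p.IsRoot a) : p.roots = a ::ₘ (p /ₘ (X - C a)).roots := by
  conv_lhs => rw [← mul_divByMonic_eq_iff_isRoot.mpr ha]
  rw [roots_mul ((mul_divByMonic_eq_iff_isRoot.mpr ha).symm ▸ hp.ne_zero), roots_X_sub_C,
    singleton_add]

theorem Monic.divByMonic_X_sub_C {R : Type*} [CommRing R] {p : R[X]} (hp : p.Monic) {a : R}
    (ha : p.IsRoot a) : (p /ₘ (X - C a)).Monic :=
  (monic_X_sub_C a).of_mul_monic_left ((mul_divByMonic_eq_iff_isRoot.mpr ha).symm ▸ hp)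

theorem Monic.nnnorm_lt_of_isRoot {K : Type*} [NormedDivisionRing K] {p : K[X]} (hp : p.Monic)
    {M : NNReal} (hM : ∀ k < p.natDegree, ‖p.coeff k‖₊ ≤ M) {z : K} (hz : p.IsRoot z) :
    ‖z‖₊ < M + 1 := by
  refine (hz.norm_lt_cauchyBound hp.ne_zero).trans_le ?_
  rw [cauchyBound, hp.leadingCoeff, nnnorm_one, div_one]
  gcongr
  exact Finset.sup_le fun k hk => hM k (Finset.mem_range.mp hk)

theorem Monic.coeff_eq_of_natDegree_le {R : Type*} [Semiring R] {p q : R[X]} (hp : p.Monic)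
    (hq : q.Monic) (hpq : p.natDegree = q.natDegree) {k : ℕ} (hk : p.natDegree ≤ k) :
    p.coeff k = q.coeff k := by
  rcases hk.eq_or_lt with rfl | hk
  · rw [hp.coeff_natDegree, hpq, hq.coeff_natDegree]
  · rw [coeff_eq_zero_of_natDegree_lt hk, coeff_eq_zero_of_natDegree_lt (hpq ▸ hk)]

theorem eventually_nnnorm_coeff_le {R : Type*} [SeminormedRing R] {l : Filter ι} {g : ι → R[X]}
    {p : R[X]} (hcoeff : ∀ k, Tendsto (fun i => (g i).coeff k) l (𝓝 (p.coeff k))) (N : ℕ) :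
    ∀ᶠ i in l, ∀ k < N, ‖(g i).coeff k‖₊ ≤ (Finset.range N).sup (‖p.coeff ·‖₊) + 1 :=
  (Set.finite_lt_nat N).eventually_all.mpr fun k hk =>
    (hcoeff k).nnnorm.eventually_le_const
      ((Finset.le_sup (f := (‖p.coeff ·‖₊)) (Finset.mem_range.mpr hk)).trans_lt (lt_add_one _))

section Tendsto

variable {R : Type*} [CommRing R] [TopologicalSpace R] [IsTopologicalRing R] {l : Filter ι}
  {g : ι → R[X]} {p : R[X]} {z : ι → R} {w : R}

theorem tendsto_eval_of_tendsto_coeff (hdeg : ∀ᶠ i in l, (g i).natDegree = p.natDegree)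
    (hcoeff : ∀ k, Tendsto (fun i => (g i).coeff k) l (𝓝 (p.coeff k))) (hz : Tendsto z l (𝓝 w)) :
    Tendsto (fun i => (g i).eval (z i)) l (𝓝 (p.eval w)) := by
  rw [eval_eq_sum_range]
  refine (tendsto_finsetSum _ fun k _ => (hcoeff k).mul (hz.pow k)).congr' ?_
  filter_upwards [hdeg] with i hi
  rw [eval_eq_sum_range, hi]

theorem isRoot_of_tendsto [T2Space R] [l.NeBot] (hdeg : ∀ᶠ i in l, (g i).natDegree = p.natDegree)
    (hcoeff : ∀ k, Tendsto (fun i => (g i).coeff k) l (𝓝 (p.coeff k))) (hz : Tendsto z l (𝓝 w))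
    (hroot : ∀ᶠ i in l, (g i).IsRoot (z i)) : p.IsRoot w :=
  tendsto_nhds_unique (tendsto_eval_of_tendsto_coeff hdeg hcoeff hz)
    (tendsto_const_nhds.congr' (hroot.mono fun _ hi => hi.symm))

theorem tendsto_coeff_divByMonic_X_sub_C (hdeg : ∀ᶠ i in l, (g i).natDegree = p.natDegree)
    (hcoeff : ∀ k, Tendsto (fun i => (g i).coeff k) l (𝓝 (p.coeff k))) (hz : Tendsto z l (𝓝 w))
    (k : ℕ) :
    Tendsto (fun i => (g i /ₘ (X - C (z i))).coeff k) l (𝓝 ((p /ₘ (X - C w)).coeff k)) := by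
  rw [coeff_divByMonic_X_sub_C]
  refine (tendsto_finsetSum _ fun t _ => (hz.pow _).mul (hcoeff t)).congr' ?_
  filter_upwards [hdeg] with i hi
  rw [coeff_divByMonic_X_sub_C, hi]

end Tendsto

theorem exists_isRoot_tendsto (U : Ultrafilter ι) {g : ι → ℂ[X]} {p : ℂ[X]}
    (hp : 0 < p.natDegree) (hg : ∀ᶠ i in U, (g i).Monic ∧ (g i).natDegree = p.natDegree)
    (hcoeff : ∀ k, Tendsto (fun i => (g i).coeff k) U (𝓝 (p.coeff k))) :
    ∃ (z : ι → ℂ) (w : ℂ), (∀ᶠ i in U, (g i).IsRoot (z i)) ∧ Tendsto z U (𝓝 w) := by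
  have hex : ∀ i, ∃ x, 0 < (g i).degree → (g i).IsRoot x := fun i => by
    by_cases h : 0 < (g i).degree
    · exact (Complex.exists_root h).imp fun _ hx _ => hx
    · exact ⟨0, fun h' => absurd h' h⟩
  choose z hz using hex
  have hroot : ∀ᶠ i in U, (g i).IsRoot (z i) := hg.mono fun i hi => hz i <| by
    rw [degree_eq_natDegree hi.1.ne_zero, hi.2]
    exact_mod_cast hp
  set M := (Finset.range p.natDegree).sup (‖p.coeff ·‖₊) + 1
  have hbounded : ∀ᶠ i in U, z i ∈ Metric.closedBall 0 (M + 1 : NNReal) := by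
    filter_upwards [hg, hroot, eventually_nnnorm_coeff_le hcoeff p.natDegree]
      with i hgi hzi hcoeffi
    rw [mem_closedBall_zero_iff, ← coe_nnnorm, NNReal.coe_le_coe]
    exact (hgi.1.nnnorm_lt_of_isRoot (hgi.2 ▸ hcoeffi) hzi).le
  obtain ⟨w, -, hw⟩ :=
    (isCompact_closedBall _ _).ultrafilter_le_nhds (U.map z) (le_principal_iff.mpr hbounded)
  exact ⟨z, w, hroot, hw⟩

theorem eventually_rel_roots_of_ultrafilter (U : Ultrafilter ι) {r : ℝ} (hr : 0 < r) (n : ℕ) :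
    ∀ {g : ι → ℂ[X]} {p : ℂ[X]}, p.Monic → p.natDegree = n →
      (∀ᶠ i in U, (g i).Monic ∧ (g i).natDegree = p.natDegree) →
      (∀ k, Tendsto (fun i => (g i).coeff k) U (𝓝 (p.coeff k))) →
      ∀ᶠ i in U, Rel (fun a b => dist a b < r) (g i).roots p.roots := by
  induction n with
  | zero =>
    intro g p hp hpdeg hg _
    filter_upwards [hg] with i hi
    rw [hp.natDegree_eq_zero.mp hpdeg, hi.1.natDegree_eq_zero.mp (hi.2.trans hpdeg), roots_one]
    exact Rel.zero
  | succ n ih =>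
    intro g p hp hpdeg hg hcoeff
    obtain ⟨z, w, hroot, hzw⟩ := exists_isRoot_tendsto U (hpdeg ▸ n.succ_pos) hg hcoeff
    have hdeg : ∀ᶠ i in U, (g i).natDegree = p.natDegree := hg.mono fun _ hi => hi.2
    have hpw : p.IsRoot w := isRoot_of_tendsto hdeg hcoeff hzw hroot
    have hquot := ih (g := fun i => g i /ₘ (X - C (z i))) (hp.divByMonic_X_sub_C hpw)
      (by rw [natDegree_divByMonic _ (monic_X_sub_C w), natDegree_X_sub_C, hpdeg, n.add_sub_cancel])
      (by
        filter_upwards [hg, hroot] with i hgi hzi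
        refine ⟨hgi.1.divByMonic_X_sub_C hzi, ?_⟩
        simp only [natDegree_divByMonic _ (monic_X_sub_C _), natDegree_X_sub_C, hgi.2])
      (tendsto_coeff_divByMonic_X_sub_C hdeg hcoeff hzw)
    filter_upwards [hg, hroot, hquot, hzw.eventually (Metric.ball_mem_nhds w hr)]
      with i hgi hzi hquoti hdist
    rw [hgi.1.roots_eq_cons_roots_divByMonic hzi, hp.roots_eq_cons_roots_divByMonic hpw]
    exact hquoti.cons hdist

theorem eventually_rel_roots {l : Filter ι} {g : ι → ℂ[X]} {p : ℂ[X]} (hp : p.Monic)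
    (hg : ∀ᶠ i in l, (g i).Monic ∧ (g i).natDegree = p.natDegree)
    (hcoeff : ∀ k, Tendsto (fun i => (g i).coeff k) l (𝓝 (p.coeff k))) {r : ℝ} (hr : 0 < r) :
    ∀ᶠ i in l, Rel (fun a b => dist a b < r) (g i).roots p.roots :=
  mem_iff_ultrafilter.mpr fun U hU =>
    eventually_rel_roots_of_ultrafilter U hr _ hp rfl (hg.filter_mono hU)
      fun k => (hcoeff k).mono_left hU

theorem Monic.exists_pos_rel_roots {p : ℂ[X]} (hp : p.Monic) {r : ℝ} (hr : 0 < r) :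
    ∃ δ > 0, ∀ q : ℂ[X], q.Monic → q.natDegree = p.natDegree →
      (∀ k < p.natDegree, dist (q.coeff k) (p.coeff k) < δ) →
      Rel (fun a b => dist a b < r) q.roots p.roots := by
  by_contra! h
  choose g hgm hgdeg hgclose hgrel using fun i : ℕ => h (1 / (i + 1)) Nat.one_div_pos_of_nat
  have hcoeff (k : ℕ) : Tendsto (fun i => (g i).coeff k) atTop (𝓝 (p.coeff k)) := by
    by_cases hk : k < p.natDegree
    · exact tendsto_iff_dist_tendsto_zero.mpr <| squeeze_zero (fun _ => dist_nonneg)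
        (fun i => (hgclose i k hk).le) tendsto_one_div_add_atTop_nhds_zero_nat
    · refine tendsto_const_nhds.congr fun i => ?_
      exact hp.coeff_eq_of_natDegree_le (hgm i) (hgdeg i).symm (not_lt.mp hk)
  obtain ⟨i, hi⟩ :=
    (eventually_rel_roots hp (.of_forall fun i => ⟨hgm i, hgdeg i⟩) hcoeff hr).exists
  exact hgrel i hi

end Polynomial

open scoped Classical in
theorem stmt10_general (n k : ℕ) (f : Polynomial ℂ) (hf : f.Monic) (hdeg : f.natDegree = n)
    (α : Fin k → ℂ) (hα : Function.Injective α) (m : Fin k → ℕ)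
    (hfact : f = ∏ j, (X - C (α j)) ^ (m j))
    (ε : ℝ) (hε : 0 < ε)
    (hεsmall : ∀ i j : Fin k, i ≠ j → ε < dist (α i) (α j) / 2) :
    ∃ δ > (0 : ℝ), ∀ g : Polynomial ℂ, g.Monic → g.natDegree = n →
      (∀ l < n, dist (g.coeff l) (f.coeff l) < δ) →
      ∀ j : Fin k,
        (g.roots.filter fun z => dist z (α j) < ε).card = m j := by
  subst hdeg
  obtain ⟨δ, hδ, hroots⟩ := hf.exists_pos_rel_roots hε
  refine ⟨δ, hδ, fun g hg hgdeg hclose j => ?_⟩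
  have hfroots : f.roots = ∑ i, m i • {α i} := hfact ▸ roots_prod_X_sub_C_pow _ α m
  rw [(hroots g hg hgdeg hclose).card_filter_eq (q := (α j = ·)), ← count_eq_card_filter_eq,
    hfroots]
  · simp [count_sum', count_singleton, hα.eq_iff]
  · intro a _ b hb hab
    obtain ⟨i, -, hi⟩ := mem_sum.mp (hfroots ▸ hb)
    obtain rfl : b = α i := mem_singleton.mp (mem_nsmul.mp hi).2
    rw [eq_comm]
    exact dist_lt_iff_eq_of_separated hab fun hne => hεsmall i j (mt (congrArg α) hne)

open scoped Classical in
/-- Continuity of roots: a monic complex polynomial close enough to `f` (coefficientwise)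
has exactly `m j` roots, counted with multiplicity, in the `ε`-disk around the `j`-th
distinct root `α j` of `f`. -/
theorem stmt10 (n k : ℕ) (f : Polynomial ℂ) (hf : f.Monic) (hdeg : f.natDegree = n)
    (α : Fin k → ℂ) (hα : Function.Injective α) (m : Fin k → ℕ) (hm : ∀ j, 0 < m j)
    (hfact : f = ∏ j, (X - C (α j)) ^ (m j))
    (ε : ℝ) (hε : 0 < ε)
    (hεsmall : ∀ i j : Fin k, i ≠ j → ε < dist (α i) (α j) / 2) :
    ∃ δ > (0 : ℝ), ∀ g : Polynomial ℂ, g.Monic → g.natDegree = n →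
      (∀ l < n, dist (g.coeff l) (f.coeff l) < δ) →
      ∀ j : Fin k,
        (g.roots.filter fun z => dist z (α j) < ε).card = m j :=
  stmt10_general n k f hf hdeg α hα m hfact ε hε hεsmall
end

section
/- Let s ≥ 3 and g_u(x) = x^s + t₁x + 1 over ℝ(t₁). The Bezoutian matrix B_u = M_s(g_u, g_u′) = (b_{ij}) has entries: b_{11} = s; b_{1s} = b_{s1} = t₁; b_{ij} = (1−s)t₁ when i + j = s + 1 and 2 ≤ i, j ≤ s−1; b_{ij} = −s when i + j = s + 2; b_{ss} = t₁²; and b_{ij} = 0 otherwise. -/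
/-!
Write `h_n(x, y) = ∑_{i<n} x^i y^{n-1-i}`, so that `(x - y) h_n = x^n - y^n`. Since
`g' = s x^{s-1} + t₁`, expanding shows that `g(x)g'(y) − g(y)g'(x)` is `x − y` times
`s x^{s-1}y^{s-1} + (1 - s) t₁ h_s + s t₁ (x^{s-1} + y^{s-1}) − s h_{s-1} + t₁²`,
and `B` is this polynomial because `F[x][y]` is a domain. Its coefficients are the claimed
entries: `h_s` and `h_{s-1}` fill the antidiagonals `i + j = s + 1` and `i + j = s + 2`, and the
terms `s t₁ x^{s-1}`, `s t₁ y^{s-1}` turn `(1 - s) t₁` into `t₁` at the two ends of the first one.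
-/

open Polynomial

/-- The numerator `f₁(x)f₂(y) − f₁(y)f₂(x)` of the Bezoutian generating polynomial,
as an element of `F[x][y]` (inner variable `x`, outer variable `y`). -/
noncomputable def bezNum {F : Type*} [CommRing F] (f₁ f₂ : Polynomial F) :
    Polynomial (Polynomial F) :=
  C f₁ * f₂.map C - f₁.map C * C f₂

/-- The Bezoutian matrix: `α i j` (0-based) is the coefficient of
`x^(n-1-i) y^(n-1-j)` in the Bezoutian generating polynomial `B`. -/
noncomputable def bezMat {F : Type*} [CommRing F] (n : ℕ)
    (B : Polynomial (Polynomial F)) : Matrix (Fin n) (Fin n) F :=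
  fun i j => ((B.coeff (n - 1 - (j : ℕ))).coeff (n - 1 - (i : ℕ)))

namespace Polynomial

variable (F : Type*) [CommRing F]

noncomputable def bivariateGeomSum (n : ℕ) : F[X][X] :=
  ∑ i ∈ Finset.range n, C X ^ i * X ^ (n - 1 - i)

theorem C_X_sub_X_mul_bivariateGeomSum (n : ℕ) :
    (C X - X) * bivariateGeomSum F n = C X ^ n - X ^ n := by
  rw [bivariateGeomSum, mul_comm, geom_sum₂_mul]

theorem coeff_coeff_bivariateGeomSum (n a b : ℕ) :
    ((bivariateGeomSum F n).coeff b).coeff a = if a + b + 1 = n then 1 else 0 := by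
  simp only [bivariateGeomSum, finsetSum_coeff, ← C_pow, coeff_C_mul, coeff_X_pow, mul_ite,
    mul_one, mul_zero, apply_ite (coeff · a), coeff_zero]
  simp_rw [← ite_and, and_comm (a := b = _), ite_and]
  rw [Finset.sum_ite_eq, ← ite_and]
  exact if_congr (by rw [Finset.mem_range]; omega) rfl rfl

theorem C_X_sub_X_ne_zero [Nontrivial F] : (C X - X : F[X][X]) ≠ 0 := by
  intro h
  simpa using congrArg (coeff · 1) h

noncomputable def trinomialBezoutian (s : ℕ) (t₁ : F) : F[X][X] :=
  C (C (s : F) * X ^ (s - 1)) * X ^ (s - 1) + C (C ((1 - s) * t₁)) * bivariateGeomSum F s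
    + C (C (s * t₁) * X ^ (s - 1)) + C (C (s * t₁)) * X ^ (s - 1)
    - C (C (s : F)) * bivariateGeomSum F (s - 1) + C (C (t₁ ^ 2))

theorem C_X_sub_X_mul_trinomialBezoutian (s : ℕ) (hs : 1 ≤ s) (t₁ : F) :
    (C X - X) * trinomialBezoutian F s t₁ =
      bezNum (X ^ s + C t₁ * X + 1) (X ^ s + C t₁ * X + 1).derivative := by
  obtain ⟨m, rfl⟩ : ∃ m, s = m + 1 := ⟨s - 1, by omega⟩
  have hderiv : (X ^ (m + 1) + C t₁ * X + 1 : F[X]).derivative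
      = C ((m + 1 : ℕ) : F) * X ^ m + C t₁ := by
    simp only [derivative_add, derivative_X_pow, derivative_C_mul_X, derivative_one, add_zero]
    rfl
  rw [hderiv, trinomialBezoutian, bezNum, Nat.add_sub_cancel]
  simp only [Polynomial.map_add, Polynomial.map_mul, Polynomial.map_pow, Polynomial.map_one,
    map_X, map_C, map_add, map_mul, map_pow, map_sub, map_one]
  linear_combination
    (1 - C (C ((m + 1 : ℕ) : F))) * C (C t₁) * C_X_sub_X_mul_bivariateGeomSum F (m + 1)
    - C (C ((m + 1 : ℕ) : F)) * C_X_sub_X_mul_bivariateGeomSum F m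

theorem coeff_coeff_trinomialBezoutian (s : ℕ) (t₁ : F) (a b : ℕ) :
    ((trinomialBezoutian F s t₁).coeff b).coeff a =
      (if a = s - 1 ∧ b = s - 1 then (s : F) else 0)
      + (if a + b + 1 = s then (1 - s) * t₁ else 0)
      + (if a = s - 1 ∧ b = 0 then s * t₁ else 0) + (if a = 0 ∧ b = s - 1 then s * t₁ else 0)
      - (if a + b + 2 = s then (s : F) else 0) + (if a = 0 ∧ b = 0 then t₁ ^ 2 else 0) := by
  simp only [trinomialBezoutian, coeff_add, coeff_sub, coeff_C_mul, coeff_X_pow, coeff_C,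
    coeff_coeff_bivariateGeomSum, mul_ite, mul_one, mul_zero, apply_ite (coeff · a), coeff_zero,
    show a + b + 1 = s - 1 ↔ a + b + 2 = s by omega]
  simp_rw [← ite_and, and_comm (a := b = _)]

end Polynomial

theorem stmt14_general {F : Type*} [Field F] (s : ℕ) (hs : 3 ≤ s) (t₁ : F)
    (B : Polynomial (Polynomial F))
    (hB : (C (X : Polynomial F) - X) * B =
      bezNum (X ^ s + C t₁ * X + 1) (X ^ s + C t₁ * X + 1).derivative) :
    ∀ i j : Fin s,
      bezMat s B i j =
        if ((i : ℕ) + 1 = 1 ∧ (j : ℕ) + 1 = 1) then (s : F)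
        else if (((i : ℕ) + 1 = 1 ∧ (j : ℕ) + 1 = s) ∨
            ((i : ℕ) + 1 = s ∧ (j : ℕ) + 1 = 1)) then t₁
        else if ((i : ℕ) + 1 + ((j : ℕ) + 1) = s + 1 ∧
            2 ≤ (i : ℕ) + 1 ∧ (i : ℕ) + 1 ≤ s - 1 ∧
            2 ≤ (j : ℕ) + 1 ∧ (j : ℕ) + 1 ≤ s - 1) then (1 - (s : F)) * t₁
        else if ((i : ℕ) + 1 + ((j : ℕ) + 1) = s + 2) then -(s : F)
        else if ((i : ℕ) + 1 = s ∧ (j : ℕ) + 1 = s) then t₁ ^ 2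
        else 0 := by
  have hB_eq : B = trinomialBezoutian F s t₁ :=
    mul_left_cancel₀ (C_X_sub_X_ne_zero F)
      (hB.trans (C_X_sub_X_mul_trinomialBezoutian F s (by omega) t₁).symm)
  intro i j
  have hi := i.isLt
  have hj := j.isLt
  rw [bezMat, hB_eq]
  -- `omega` decides every condition in each case, except in the corner case, a disjunction.
  split_ifs <;> rw [coeff_coeff_trinomialBezoutian] <;>
    simp (disch := omega) only [if_pos, if_neg] <;> (try split_ifs) <;>
    first | (exfalso; omega) | ring

/-- Entries of the Bezoutian matrix of `g(x) = x^s + t₁x + 1` (`s ≥ 3`); indices are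
written `1`-based as in the paper, `I = i + 1`, `J = j + 1`. -/
theorem stmt14 {F : Type*} [Field F] [CharZero F] (s : ℕ) (hs : 3 ≤ s) (t₁ : F)
    (B : Polynomial (Polynomial F))
    (hB : (C (X : Polynomial F) - X) * B =
      bezNum (X ^ s + C t₁ * X + 1) (X ^ s + C t₁ * X + 1).derivative) :
    ∀ i j : Fin s,
      bezMat s B i j =
        if ((i : ℕ) + 1 = 1 ∧ (j : ℕ) + 1 = 1) then (s : F)
        else if (((i : ℕ) + 1 = 1 ∧ (j : ℕ) + 1 = s) ∨
            ((i : ℕ) + 1 = s ∧ (j : ℕ) + 1 = 1)) then t₁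
        else if ((i : ℕ) + 1 + ((j : ℕ) + 1) = s + 1 ∧
            2 ≤ (i : ℕ) + 1 ∧ (i : ℕ) + 1 ≤ s - 1 ∧
            2 ≤ (j : ℕ) + 1 ∧ (j : ℕ) + 1 ≤ s - 1) then (1 - (s : F)) * t₁
        else if ((i : ℕ) + 1 + ((j : ℕ) + 1) = s + 2) then -(s : F)
        else if ((i : ℕ) + 1 = s ∧ (j : ℕ) + 1 = s) then t₁ ^ 2
        else 0 :=
  stmt14_general s hs t₁ B hB
end

section
/- Stability of root count past the largest discriminant root: Let v ∈ ℝ^{s+1}, f_v(t;x) = x^n + t·g_v(x), P_v(t) = det M_n(f_v(t;x), f_v′(t;x)), and α_v = max{α ∈ ℝ : P_v(α) = 0}. If there exists ρ₀ > α_v such that the number of distinct real roots N of f_v(ξ;x) equals γ₀ for all ξ > ρ₀, then N_{f_v(ξ;x)} = γ₀ for all ξ > α_v. -/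
open Polynomial

/-! If `ξ > α` then `P(ξ) ≠ 0`, so `f(ξ; x)` has no multiple real root: at a common root `r` of
`f` and `f′` the vector `(r ^ (n - 1 - j))ⱼ` lies in the kernel of the Bezoutian matrix.
Simple real roots persist and stay isolated under small changes of `ξ`, and by Cauchy's bound
no real root comes in from infinity, so the number of distinct real roots is locally constant
on `(α, ∞)`; being integer valued on a connected set, it is constant there. -/

open Set Filter Topology Metric

section Bezoutian

variable {R : Type*} [CommRing R] {n : ℕ} {f₁ f₂ : R[X]} {B : R[X][X]}

theorem natDegree_bezNum_le (h₁ : f₁.natDegree ≤ n) (h₂ : f₂.natDegree ≤ n) :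
    (bezNum f₁ f₂).natDegree ≤ n := by
  unfold bezNum
  refine (natDegree_sub_le _ _).trans (max_le ?_ ?_) <;> refine natDegree_mul_le.trans ?_
  · simpa using natDegree_map_le.trans h₂
  · simpa using natDegree_map_le.trans h₁

theorem eval_C_bezNum (f₁ f₂ : R[X]) (r : R) :
    (bezNum f₁ f₂).eval (C r) = f₁ * C (f₂.eval r) - C (f₁.eval r) * f₂ := by
  simp [bezNum, eval_map, eval₂_at_apply]

theorem bezMat_mulVec_pow (hB : B.natDegree < n) (r : R) :
    (bezMat n B).mulVec (fun j : Fin n => r ^ (n - 1 - (j : ℕ))) =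
      fun i : Fin n => (B.eval (C r)).coeff (n - 1 - (i : ℕ)) := by
  ext i
  simp only [eval_eq_sum_range' hB, finsetSum_coeff, ← C_pow, coeff_mul_C]
  change ∑ j : Fin n, (B.coeff (n - 1 - (j : ℕ))).coeff (n - 1 - (i : ℕ)) *
    r ^ (n - 1 - (j : ℕ)) = _
  rw [Fin.sum_univ_eq_sum_range
      (fun j => (B.coeff (n - 1 - j)).coeff (n - 1 - i) * r ^ (n - 1 - j)),
    Finset.sum_range_reflect (fun k => (B.coeff k).coeff (n - 1 - i) * r ^ k)]

variable [IsDomain R]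

theorem natDegree_lt_of_mul_eq_bezNum (hn : 0 < n) (h₁ : f₁.natDegree ≤ n)
    (h₂ : f₂.natDegree ≤ n) (hB : (C X - X) * B = bezNum f₁ f₂) : B.natDegree < n := by
  rcases eq_or_ne B 0 with rfl | hB0
  · simpa using hn
  have hX : (C X - X : R[X][X]) = -(X - C X) := by ring
  have hdeg := natDegree_mul (p := (C X - X : R[X][X]))
    (by rw [hX]; exact neg_ne_zero.2 (X_sub_C_ne_zero _)) hB0
  rw [hB, hX, natDegree_neg, natDegree_X_sub_C] at hdeg
  have := natDegree_bezNum_le h₁ h₂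
  omega

theorem eval_C_eq_zero_of_mul_eq_bezNum (hB : (C X - X) * B = bezNum f₁ f₂) {r : R}
    (h₁ : f₁.IsRoot r) (h₂ : f₂.IsRoot r) : B.eval (C r) = 0 := by
  have h := congrArg (eval (C r)) hB
  rw [eval_C_bezNum, h₁.eq_zero, h₂.eq_zero, eval_mul] at h
  simpa [X_sub_C_ne_zero] using h

theorem det_bezMat_eq_zero_of_isRoot (hn : 0 < n) (h₁ : f₁.natDegree ≤ n)
    (h₂ : f₂.natDegree ≤ n) (hB : (C X - X) * B = bezNum f₁ f₂) {r : R} (hr₁ : f₁.IsRoot r)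
    (hr₂ : f₂.IsRoot r) : (bezMat n B).det = 0 := by
  classical
  refine Matrix.exists_mulVec_eq_zero_iff.mp
    ⟨fun j : Fin n => r ^ (n - 1 - (j : ℕ)), fun h => ?_, ?_⟩
  · simpa using congrFun h ⟨n - 1, by omega⟩
  · rw [bezMat_mulVec_pow (natDegree_lt_of_mul_eq_bezNum hn h₁ h₂ hB),
      eval_C_eq_zero_of_mul_eq_bezNum hB hr₁ hr₂]
    rfl

end Bezoutian

theorem Finset.card_eq_of_forall_existsUnique_mem {α β : Type*} {S : Finset α} {R : Finset β}
    {I : β → Set α} (hdisj : (R : Set β).PairwiseDisjoint I)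
    (hcover : ∀ x ∈ S, ∃ r ∈ R, x ∈ I r) (hunique : ∀ r ∈ R, ∃! x, x ∈ S ∧ x ∈ I r) :
    S.card = R.card := by
  classical
  have hS : S = R.biUnion fun r => S.filter (· ∈ I r) := by
    ext x
    simp only [mem_biUnion, mem_filter]
    exact ⟨fun hx => (hcover x hx).imp fun r hr => ⟨hr.1, hx, hr.2⟩, fun ⟨_, _, hx, _⟩ => hx⟩
  rw [hS, card_biUnion]
  · refine (sum_congr rfl fun r hr => ?_).trans (card_eq_sum_ones R).symm
    obtain ⟨x, hx, hxu⟩ := hunique r hr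
    exact card_eq_one.2 ⟨x, by ext y; simpa using ⟨fun hy => hxu y hy, fun h => h ▸ hx⟩⟩
  · intro r hr r' hr' hne
    exact disjoint_filter.2 fun x _ hx hx' => (hdisj hr hr' hne).ne_of_mem hx hx' rfl

namespace Polynomial

theorem strictMonoOn_or_strictAntiOn_of_derivative_ne_zero (p : ℝ[X]) {s : Set ℝ}
    (hs : Convex ℝ s) (hd : ∀ x ∈ s, p.derivative.eval x ≠ 0) :
    StrictMonoOn p.eval s ∨ StrictAntiOn p.eval s := by
  have hderiv : ∀ x ∈ interior s, deriv p.eval x = p.derivative.eval x := fun x _ => p.deriv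
  rcases hasDerivWithinAt_forall_lt_or_forall_gt_of_forall_ne hs
    (fun x _ => (p.hasDerivAt x).hasDerivWithinAt) hd with hneg | hpos
  · exact .inr <| strictAntiOn_of_deriv_neg hs p.continuousOn fun x hx => by
      rw [hderiv x hx]; exact hneg x (interior_subset hx)
  · exact .inl <| strictMonoOn_of_deriv_pos hs p.continuousOn fun x hx => by
      rw [hderiv x hx]; exact hpos x (interior_subset hx)

theorem existsUnique_isRoot_of_derivative_ne_zero (p : ℝ[X]) {a b : ℝ} (hab : a ≤ b)
    (hd : ∀ x ∈ Icc a b, p.derivative.eval x ≠ 0) (hsign : p.eval a * p.eval b < 0) :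
    ∃! x, x ∈ Icc a b ∧ p.IsRoot x := by
  have hinj : InjOn p.eval (Icc a b) :=
    (p.strictMonoOn_or_strictAntiOn_of_derivative_ne_zero (convex_Icc a b) hd).elim
      StrictMonoOn.injOn StrictAntiOn.injOn
  have h0 : (0 : ℝ) ∈ uIcc (p.eval a) (p.eval b) := by
    rcases mul_neg_iff.mp hsign with h | h
    · exact mem_uIcc.2 (.inr ⟨h.2.le, h.1.le⟩)
    · exact mem_uIcc.2 (.inl ⟨h.1.le, h.2.le⟩)
  obtain ⟨x, hx, hx0⟩ := intermediate_value_uIcc p.continuousOn h0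
  rw [uIcc_of_le hab] at hx
  exact ⟨x, ⟨hx, hx0⟩, fun y hy => hinj hy.1 hx (hy.2.trans hx0.symm)⟩

theorem eval_mul_eval_neg_of_isRoot (p : ℝ[X]) {a b r : ℝ}
    (hd : ∀ x ∈ Icc a b, p.derivative.eval x ≠ 0) (hr : r ∈ Ioo a b) (hroot : p.IsRoot r) :
    p.eval a * p.eval b < 0 := by
  have ha : a ∈ Icc a b := left_mem_Icc.2 (hr.1.trans hr.2).le
  have hb : b ∈ Icc a b := right_mem_Icc.2 (hr.1.trans hr.2).le
  have hr' : r ∈ Icc a b := Ioo_subset_Icc_self hr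
  rcases p.strictMonoOn_or_strictAntiOn_of_derivative_ne_zero (convex_Icc a b) hd with h | h
  · exact mul_neg_of_neg_of_pos (hroot.eq_zero ▸ h ha hr' hr.1) (hroot.eq_zero ▸ h hr' hb hr.2)
  · exact mul_neg_of_pos_of_neg (hroot.eq_zero ▸ h ha hr' hr.1) (hroot.eq_zero ▸ h hr' hb hr.2)

theorem exists_pos_isolating_radius (p : ℝ[X]) (R : Finset ℝ)
    (hR : ∀ r ∈ R, p.derivative.eval r ≠ 0) :
    ∃ ε > 0, (R : Set ℝ).PairwiseDisjoint (fun r => closedBall r ε) ∧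
      ∀ r ∈ R, ∀ x ∈ closedBall r ε, p.derivative.eval x ≠ 0 := by
  have hderiv : ∀ r ∈ R, ∀ᶠ ε in 𝓝 (0 : ℝ), ∀ x ∈ closedBall r ε, p.derivative.eval x ≠ 0 :=
    fun r hr => eventually_closedBall_subset
      (p.derivative.continuous.continuousAt.eventually_ne (hR r hr))
  have hsep : ∀ r ∈ R, ∀ r' ∈ R, ∀ᶠ ε in 𝓝 (0 : ℝ),
      r ≠ r' → Disjoint (closedBall r ε) (closedBall r' ε) := by
    intro r _ r' _
    by_cases h : r = r'
    · simp [h]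
    · filter_upwards [eventually_lt_nhds (half_pos (dist_pos.2 h))] with ε hε _
      exact closedBall_disjoint_closedBall (by linarith)
  have hderiv' := (eventually_all_finset R).2 hderiv
  have hsep' := (eventually_all_finset R).2 fun r hr => (eventually_all_finset R).2 (hsep r hr)
  obtain ⟨ε, hε, h₁, h₂⟩ := ((eventually_mem_nhdsWithin (s := Ioi 0)).and
    ((hsep'.and hderiv').filter_mono nhdsWithin_le_nhds)).exists
  exact ⟨ε, hε, fun r hr r' hr' => h₁ r hr r' hr', h₂⟩

section Pencil

variable (p q : ℝ[X]) {ξ₀ : ℝ}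

theorem continuous_eval_add_C_mul : Continuous fun z : ℝ × ℝ => (p + C z.1 * q).eval z.2 := by
  simp only [eval_add, eval_mul, eval_C]
  exact (p.continuous.comp continuous_snd).add
    (continuous_fst.mul (q.continuous.comp continuous_snd))

theorem derivative_add_C_mul (ξ : ℝ) :
    (p + C ξ * q).derivative = p.derivative + C ξ * q.derivative := by
  simp [derivative_mul]

theorem eventually_existsUnique_isRoot_add_C_mul {a b : ℝ} (hab : a ≤ b)
    (hd : ∀ x ∈ Icc a b, (p + C ξ₀ * q).derivative.eval x ≠ 0)
    (hsign : (p + C ξ₀ * q).eval a * (p + C ξ₀ * q).eval b < 0) :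
    ∀ᶠ ξ in 𝓝 ξ₀, ∃! x, x ∈ Icc a b ∧ (p + C ξ * q).IsRoot x := by
  have hd' : ∀ᶠ ξ in 𝓝 ξ₀, ∀ x ∈ Icc a b, (p + C ξ * q).derivative.eval x ≠ 0 := by
    simp only [derivative_add_C_mul] at hd ⊢
    exact isCompact_Icc.eventually_forall_of_forall_eventually fun x hx =>
      (continuous_eval_add_C_mul _ _).continuousAt.eventually_ne (hd x hx)
  have hcont : Continuous fun ξ => (p + C ξ * q).eval a * (p + C ξ * q).eval b :=
    ((continuous_eval_add_C_mul p q).comp (continuous_id.prodMk continuous_const)).mul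
      ((continuous_eval_add_C_mul p q).comp (continuous_id.prodMk continuous_const))
  filter_upwards [hd', hcont.continuousAt.eventually_lt continuousAt_const hsign]
    with ξ hdξ hsξ
  exact existsUnique_isRoot_of_derivative_ne_zero _ hab hdξ hsξ

theorem eventually_isRoot_add_C_mul_imp_mem {K U : Set ℝ} (hK : IsCompact K) (hU : IsOpen U)
    (hbdd : ∀ᶠ ξ in 𝓝 ξ₀, ∀ x, (p + C ξ * q).IsRoot x → x ∈ K)
    (h₀ : ∀ x, (p + C ξ₀ * q).IsRoot x → x ∈ U) :
    ∀ᶠ ξ in 𝓝 ξ₀, ∀ x, (p + C ξ * q).IsRoot x → x ∈ U := by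
  have hne : ∀ᶠ ξ in 𝓝 ξ₀, ∀ x ∈ K \ U, (p + C ξ * q).eval x ≠ 0 :=
    (hK.diff hU).eventually_forall_of_forall_eventually fun x hx =>
      (continuous_eval_add_C_mul p q).continuousAt.eventually_ne fun h => hx.2 (h₀ x h)
  filter_upwards [hbdd, hne] with ξ hK' hU' x hx
  by_contra hxU
  exact hU' x ⟨hK' x hx, hxU⟩ hx

theorem eventually_card_roots_toFinset_add_C_mul_eq (hne : ∀ ξ, p + C ξ * q ≠ 0)
    (hsimple : ∀ x, (p + C ξ₀ * q).IsRoot x → (p + C ξ₀ * q).derivative.eval x ≠ 0)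
    (hbdd : ∃ K, IsCompact K ∧ ∀ᶠ ξ in 𝓝 ξ₀, ∀ x, (p + C ξ * q).IsRoot x → x ∈ K) :
    ∀ᶠ ξ in 𝓝 ξ₀,
      (p + C ξ * q).roots.toFinset.card = (p + C ξ₀ * q).roots.toFinset.card := by
  have hmem : ∀ ξ x, x ∈ (p + C ξ * q).roots.toFinset ↔ (p + C ξ * q).IsRoot x :=
    fun ξ x => by rw [Multiset.mem_toFinset, mem_roots (hne ξ)]
  set R := (p + C ξ₀ * q).roots.toFinset
  obtain ⟨ε, hε, hdisj, hd⟩ :=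
    exists_pos_isolating_radius _ R fun r hr => hsimple r ((hmem ξ₀ r).1 hr)
  have hunique : ∀ r ∈ R, ∀ᶠ ξ in 𝓝 ξ₀,
      ∃! x, x ∈ closedBall r ε ∧ (p + C ξ * q).IsRoot x := by
    intro r hr
    simp only [Real.closedBall_eq_Icc] at hd ⊢
    exact eventually_existsUnique_isRoot_add_C_mul p q (by linarith) (hd r hr)
      (eval_mul_eval_neg_of_isRoot _ (hd r hr) ⟨by linarith, by linarith⟩ ((hmem ξ₀ r).1 hr))
  obtain ⟨K, hK, hKroots⟩ := hbdd
  have hcover : ∀ᶠ ξ in 𝓝 ξ₀, ∀ x, (p + C ξ * q).IsRoot x → x ∈ ⋃ r ∈ R, ball r ε :=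
    eventually_isRoot_add_C_mul_imp_mem p q hK (isOpen_biUnion fun _ _ => isOpen_ball) hKroots
      fun x hx => mem_biUnion ((hmem ξ₀ x).2 hx) (mem_ball_self hε)
  filter_upwards [(Finset.eventually_all R).2 hunique, hcover] with ξ hξu hξc
  refine Finset.card_eq_of_forall_existsUnique_mem hdisj (fun x hx => ?_) fun r hr => ?_
  · obtain ⟨r, hr, hx⟩ := mem_iUnion₂.1 (hξc x ((hmem ξ x).1 hx))
    exact ⟨r, hr, ball_subset_closedBall hx⟩
  · simpa only [hmem, and_comm] using hξu r hr

end Pencil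

section MonicPencil

variable {n : ℕ} {g : ℝ[X]}

theorem natDegree_X_pow_add_C_mul (hg : g.natDegree < n) (ξ : ℝ) :
    (X ^ n + C ξ * g).natDegree = n := by
  rw [natDegree_add_eq_left_of_natDegree_lt
    (by rw [natDegree_X_pow]; exact (natDegree_C_mul_le ξ g).trans_lt hg), natDegree_X_pow]

theorem monic_X_pow_add_C_mul (hg : g.natDegree < n) (ξ : ℝ) : (X ^ n + C ξ * g).Monic :=
  monic_X_pow_add <| degree_le_natDegree.trans_lt <| by
    exact_mod_cast (natDegree_C_mul_le ξ g).trans_lt hg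

theorem cauchyBound_X_pow_add_C_mul (hg : g.natDegree < n) (ξ : ℝ) :
    cauchyBound (X ^ n + C ξ * g) = ‖ξ‖₊ * (Finset.range n).sup (‖g.coeff ·‖₊) + 1 := by
  rw [cauchyBound, (monic_X_pow_add_C_mul hg ξ).leadingCoeff, natDegree_X_pow_add_C_mul hg,
    nnnorm_one, div_one, NNReal.mul_finset_sup]
  congr 1
  refine Finset.sup_congr rfl fun k hk => ?_
  rw [coeff_add, coeff_X_pow, if_neg (Finset.mem_range.1 hk).ne, zero_add, coeff_C_mul,
    nnnorm_mul]

theorem exists_isCompact_forall_isRoot_X_pow_add_C_mul_mem (hg : g.natDegree < n) (ξ₀ : ℝ) :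
    ∃ K, IsCompact K ∧ ∀ᶠ ξ in 𝓝 ξ₀, ∀ x, (X ^ n + C ξ * g).IsRoot x → x ∈ K := by
  set G := (Finset.range n).sup (‖g.coeff ·‖₊)
  refine ⟨closedBall 0 ((‖ξ₀‖ + 1) * G + 1), isCompact_closedBall _ _, ?_⟩
  filter_upwards [ball_mem_nhds ξ₀ one_pos] with ξ hξ x hx
  have hroot := hx.norm_lt_cauchyBound (monic_X_pow_add_C_mul hg ξ).ne_zero
  have hξ' : ‖ξ‖ ≤ ‖ξ₀‖ + 1 := by
    have := norm_sub_norm_le ξ ξ₀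
    rw [mem_ball, dist_eq_norm] at hξ
    linarith
  rw [cauchyBound_X_pow_add_C_mul hg, ← NNReal.coe_lt_coe] at hroot
  simp only [coe_nnnorm, NNReal.coe_add, NNReal.coe_mul, NNReal.coe_one] at hroot
  rw [mem_closedBall, dist_zero_right]
  nlinarith [G.2]

end MonicPencil

end Polynomial

theorem stmt16_general (s n : ℕ) (hsn : s < n) (g : Polynomial ℝ) (hg : g.natDegree ≤ s)
    (B : ℝ → Polynomial (Polynomial ℝ))
    (hB : ∀ ξ : ℝ, (C (X : Polynomial ℝ) - X) * B ξ =
      bezNum (X ^ n + C ξ * g) (X ^ n + C ξ * g).derivative)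
    (α : ℝ)
    (hαmax : ∀ β : ℝ, (bezMat n (B β)).det = 0 → β ≤ α)
    (γ₀ : ℕ) (ρ₀ : ℝ) (hρ : α < ρ₀)
    (hstable : ∀ ξ : ℝ, ρ₀ < ξ →
      (X ^ n + C ξ * g : Polynomial ℝ).roots.toFinset.card = γ₀) :
    ∀ ξ : ℝ, α < ξ →
      (X ^ n + C ξ * g : Polynomial ℝ).roots.toFinset.card = γ₀ := by
  intro ξ hξ
  have hgn : g.natDegree < n := hg.trans_lt hsn
  have hsimple : ∀ ζ, α < ζ → ∀ x, (X ^ n + C ζ * g).IsRoot x →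
      (X ^ n + C ζ * g).derivative.eval x ≠ 0 := fun ζ hζ x hx hx' =>
    hζ.not_ge <| hαmax ζ <| det_bezMat_eq_zero_of_isRoot (by omega)
      (natDegree_X_pow_add_C_mul hgn ζ).le
      ((natDegree_derivative_le _).trans (by rw [natDegree_X_pow_add_C_mul hgn]; omega))
      (hB ζ) hx hx'
  have hlocal : ContinuousOn (fun ζ => (X ^ n + C ζ * g).roots.toFinset.card) (Ioi α) :=
    fun ζ hζ => Filter.EventuallyEq.continuousAt (eventually_card_roots_toFinset_add_C_mul_eq
      _ _ (fun ζ => (monic_X_pow_add_C_mul hgn ζ).ne_zero) (hsimple ζ hζ)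
      (exists_isCompact_forall_isRoot_X_pow_add_C_mul_mem hgn ζ)) |>.continuousWithinAt
  rw [isPreconnected_Ioi.constant hlocal hξ (show ρ₀ + 1 ∈ Ioi α by simp only [mem_Ioi]; linarith)]
  exact hstable _ (by linarith)

/-- Stability of the real root count past the largest real root `α` of
`P(t) = det M_n(f(t;x), f′(t;x))`, where `f(t;x) = xⁿ + t·g(x)`: if the number of
distinct real roots of `f(ξ;x)` is constantly `γ₀` beyond some `ρ₀ > α`, then it is
`γ₀` for all `ξ > α`. -/
theorem stmt16 (s n : ℕ) (hsn : s < n) (g : Polynomial ℝ) (hg : g.natDegree ≤ s)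
    (B : ℝ → Polynomial (Polynomial ℝ))
    (hB : ∀ ξ : ℝ, (C (X : Polynomial ℝ) - X) * B ξ =
      bezNum (X ^ n + C ξ * g) (X ^ n + C ξ * g).derivative)
    (α : ℝ)
    (hαroot : (bezMat n (B α)).det = 0)
    (hαmax : ∀ β : ℝ, (bezMat n (B β)).det = 0 → β ≤ α)
    (γ₀ : ℕ) (ρ₀ : ℝ) (hρ : α < ρ₀)
    (hstable : ∀ ξ : ℝ, ρ₀ < ξ →
      (X ^ n + C ξ * g : Polynomial ℝ).roots.toFinset.card = γ₀) :
    ∀ ξ : ℝ, α < ξ →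
      (X ^ n + C ξ * g : Polynomial ℝ).roots.toFinset.card = γ₀ :=
  stmt16_general s n hsn g hg B hB α hαmax γ₀ ρ₀ hρ hstable
end

section
/- Construction of totally complex polynomials: Let g(x) = Σ_{i=0}^s a_i x^i ∈ ℝ[x] with Disc(g) ≠ 0, g totally complex (no real roots, so s is even), a_s > 0, and n > s with n − s even. Set f(t,x) = x^n + t·g(x). Then for every real β > max{α ∈ ℝ : Disc_x(f)(α) = 0}, the polynomial f(β, x) has no real roots. -/
/-!
At `t = 0` the polynomial `f(0, x) = xⁿ` has a multiple root, so `0` is a root of the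
discriminant and every admissible `β` is positive. A real polynomial without real roots has
even degree and the sign of its leading coefficient everywhere, so `g > 0` on `ℝ` and `n` is
even; hence `xⁿ + β g(x) > 0`.
-/

open Polynomial

namespace Polynomial

variable {g : ℝ[X]}

theorem eval_pos_of_forall_eval_ne_zero_of_eval_pos (h : ∀ x, g.eval x ≠ 0) {y : ℝ}
    (hy : 0 < g.eval y) (x : ℝ) : 0 < g.eval x := by
  by_contra! hx
  obtain ⟨z, hz⟩ := intermediate_value_univ x y (f := fun x => g.eval x) g.continuous ⟨hx, hy.le⟩
  exact h z hz

theorem eval_pos_of_forall_eval_ne_zero (h : ∀ x, g.eval x ≠ 0) (hlead : 0 < g.leadingCoeff)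
    (x : ℝ) : 0 < g.eval x := by
  obtain ⟨y, hy⟩ : ∃ y, 0 < g.eval y := by
    rcases le_or_gt g.degree 0 with hdeg | hdeg
    · refine ⟨0, ?_⟩
      rw [leadingCoeff, natDegree_eq_zero_iff_degree_le_zero.mpr hdeg] at hlead
      rwa [eq_C_of_degree_le_zero hdeg, eval_C]
    · exact ((g.tendsto_atTop_of_leadingCoeff_nonneg hdeg hlead.le).eventually_gt_atTop 0).exists
  exact eval_pos_of_forall_eval_ne_zero_of_eval_pos h hy x

theorem even_natDegree_of_forall_eval_ne_zero (h : ∀ x, g.eval x ≠ 0) : Even g.natDegree := by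
  have hg : g ≠ 0 := fun hg => h 0 (by simp [hg])
  wlog hlead : 0 < g.leadingCoeff generalizing g
  · have := this (g := -g) (by simpa using h) (neg_ne_zero.mpr hg)
      (by simpa using (leadingCoeff_ne_zero.mpr hg).lt_of_le (not_lt.mp hlead))
    rwa [natDegree_neg] at this
  by_contra hodd
  rw [Nat.not_even_iff_odd] at hodd
  -- `x ↦ -g(-x)` has the same leading coefficient as `g` because the degree is odd
  set r : ℝ[X] := -g.comp (-X)
  have hr_lead : r.leadingCoeff = g.leadingCoeff := by
    rw [leadingCoeff_neg, leadingCoeff_comp (by simp)]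
    simp [hodd.neg_one_pow]
  have hr : ∀ x, r.eval x ≠ 0 := by simpa [r] using fun x => h (-x)
  have hr_eval : r.eval 0 = -g.eval 0 := by simp [r]
  linarith [eval_pos_of_forall_eval_ne_zero hr (hr_lead ▸ hlead) 0,
    eval_pos_of_forall_eval_ne_zero h hlead 0]

end Polynomial

section Bezoutian

variable {F : Type*} [CommRing F]

theorem bezNum_X_pow_derivative (m : ℕ) :
    bezNum (X ^ (m + 1) : F[X]) (derivative (X ^ (m + 1))) =
      (C X - X) * (C (C ((m : F) + 1) * X ^ m) * X ^ m) := by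
  rw [bezNum, derivative_X_pow]
  simp only [Polynomial.map_mul, Polynomial.map_pow, map_C, map_X, map_pow, map_mul, pow_succ,
    Nat.cast_add, Nat.cast_one, Nat.add_sub_cancel]
  ring

theorem det_bezMat_eq_zero_of_X_pow {n : ℕ} (hn : 2 ≤ n) {B : F[X][X]}
    (hB : (C X - X) * B = bezNum (X ^ n) (derivative (X ^ n))) : (bezMat n B).det = 0 := by
  obtain ⟨m, rfl⟩ : ∃ m, n = m + 1 := ⟨n - 1, by omega⟩
  have hB' : B = C (C ((m : F) + 1) * X ^ m) * X ^ m := by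
    rw [bezNum_X_pow_derivative] at hB
    exact (monic_X_sub_C X).isRegular.left (by linear_combination -hB)
  -- only the entry in row and column `0` is nonzero
  refine Matrix.det_eq_zero_of_row_eq_zero ⟨1, by omega⟩ fun j => ?_
  simp only [bezMat, hB', coeff_C_mul_X_pow]
  split_ifs
  · rw [coeff_C_mul_X_pow, if_neg (by omega)]
  · rfl

end Bezoutian

theorem stmt18_general (s n : ℕ) (hsn : s < n) (hpar : Even (n - s)) (g : Polynomial ℝ)
    (hdeg : g.natDegree = s)
    (hcomplex : ∀ x : ℝ, g.eval x ≠ 0) (hlead : 0 < g.coeff s)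
    (B : ℝ → Polynomial (Polynomial ℝ))
    (hB : ∀ ξ : ℝ, (C (X : Polynomial ℝ) - X) * B ξ =
      bezNum (X ^ n + C ξ * g) (X ^ n + C ξ * g).derivative)
    (α : ℝ)
    (hαmax : ∀ β : ℝ, (bezMat n (B β)).det = 0 → β ≤ α) :
    ∀ β : ℝ, α < β → ∀ x : ℝ, (X ^ n + C β * g : Polynomial ℝ).eval x ≠ 0 := by
  have hg_lead : 0 < g.leadingCoeff := by rwa [leadingCoeff, hdeg]
  have hs : Even s := hdeg ▸ even_natDegree_of_forall_eval_ne_zero hcomplex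
  have hn : Even n := Nat.sub_add_cancel hsn.le ▸ hpar.add hs
  have hn_two : 2 ≤ n := by rw [Nat.even_iff] at hn; omega
  have hα : 0 ≤ α := hαmax 0 <| det_bezMat_eq_zero_of_X_pow hn_two <| by
    simpa only [map_zero, zero_mul, add_zero] using hB 0
  intro β hβ x
  simp only [eval_add, eval_pow, eval_X, eval_mul, eval_C]
  exact (add_pos_of_nonneg_of_pos (hn.pow_nonneg x)
    (mul_pos (by linarith) (eval_pos_of_forall_eval_ne_zero hcomplex hg_lead x))).ne'

/-- Construction of totally complex polynomials: if `g` is a separable real polynomial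
of even degree `s` with positive leading coefficient and no real roots, and `n > s`
with `n − s` even, then `f(β, x) = xⁿ + β·g(x)` has no real roots for every `β`
larger than the largest real root of the discriminant of `f(t,x)` with respect to
`x` (equivalently, of `P(t) = det M_n(f(t;x), f′(t;x))`, since `f(t;·)` is monic). -/
theorem stmt18 (s n : ℕ) (hsn : s < n) (hpar : Even (n - s)) (g : Polynomial ℝ)
    (hdeg : g.natDegree = s) (hsep : g.Separable)
    (hcomplex : ∀ x : ℝ, g.eval x ≠ 0) (hlead : 0 < g.coeff s)
    (B : ℝ → Polynomial (Polynomial ℝ))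
    (hB : ∀ ξ : ℝ, (C (X : Polynomial ℝ) - X) * B ξ =
      bezNum (X ^ n + C ξ * g) (X ^ n + C ξ * g).derivative)
    (α : ℝ)
    (hαroot : (bezMat n (B α)).det = 0)
    (hαmax : ∀ β : ℝ, (bezMat n (B β)).det = 0 → β ≤ α) :
    ∀ β : ℝ, α < β → ∀ x : ℝ, (X ^ n + C β * g : Polynomial ℝ).eval x ≠ 0 :=
  stmt18_general s n hsn hpar g hdeg hcomplex hlead B hB α hαmax
end
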